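/- arXiv:2305.16890 — 2 statements merged into one kernel-verified Lean document; each statement's English description precedes it below -/
import Mathlib

section
/- Composability of assignment-preserving coresets: Let X₁, X₂ be disjoint finite point sets with weights w₁, w₂, and let (S₁, v₁), (S₂, v₂) be weighted sets such that for a fixed center set C and every cluster-weight tuple Γ, cost(X_j, w_j, C, Γ) ≤ (1+ε)·cost(S_j, v_j, C, Γ) and cost(S_j, v_j, C, Γ) ≤ (1+ε)·cost(X_j, w_j, C, Γ) for j = 1, 2 (whenever the respective assignment polytopes are nonempty). Then for every tuple Γ with ∑_i t_i = ∑_{x∈X₁∪X₂}(w₁∪w₂)(x), cost(X₁∪X₂, w₁∪w₂, C, Γ) ≤ (1+ε)·cost(S₁∪S₂, v₁∪v₂, C, Γ) and cost(S₁∪S₂, v₁∪v₂, C, Γ) ≤ (1+ε)·cost(X₁∪X₂, w₁∪w₂, C, Γ), using the fact that cost(X₁∪X₂, w, C, Γ) = min over splittings Γ = Γ₁ + Γ₂ of cost(X₁, w₁, C, Γ₁) + cost(X₂, w₂, C, Γ₂). -/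
/-!
Feasible assignments on a disjoint union `Y₁ ∪ Y₂` with column sums `t` are exactly pairs of
feasible assignments on `Y₁` and `Y₂` with column sums `t₁ + t₂ = t`, so the cost on the union is
the infimal convolution of the costs on the parts. To compare `X₁ ∪ X₂` with `S₁ ∪ S₂` at `t`,
split an assignment of `S₁ ∪ S₂` into its parts, compare each part with `Xⱼ` at `tⱼ`, and glue
the resulting assignments of `X₁` and `X₂`. Nonnegative weights make every balanced tuple
feasible, so none of these infima is taken over the empty set (where `sInf` would be `0`).
-/

/-- The constrained fractional assignment cost: the infimum over assignments
`σ` with row sums `u x` and column sums `t i` of `∑ i, ∑ x ∈ Y, σ x i * d x i`. -/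
noncomputable def clCost {α : Type*} (k : ℕ) (Y : Finset α) (u : α → ℝ)
    (d : α → Fin k → ℝ) (t : Fin k → ℝ) : ℝ :=
  sInf {v : ℝ | ∃ σ : α → Fin k → ℝ, (∀ x i, 0 ≤ σ x i) ∧
    (∀ x ∈ Y, ∑ i, σ x i = u x) ∧ (∀ i, ∑ x ∈ Y, σ x i = t i) ∧
    v = ∑ i, ∑ x ∈ Y, σ x i * d x i}

open Pointwise

lemma le_mul_csInf {s : Set ℝ} {a c : ℝ} (hc : 0 ≤ c) (hs : s.Nonempty)
    (h : ∀ b ∈ s, a ≤ c * b) : a ≤ c * sInf s := by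
  rw [← smul_eq_mul, ← Real.sInf_smul_of_nonneg hc]
  exact le_csInf hs.smul_set (by rintro _ ⟨b, hb, rfl⟩; exact h b hb)

lemma Finset.sum_union_piecewise {α β M : Type*} [DecidableEq α] [AddCommMonoid M]
    {Y₁ Y₂ : Finset α} (h : Disjoint Y₁ Y₂) (f g : α → β) (F : α → β → M) :
    ∑ x ∈ Y₁ ∪ Y₂, F x (Y₁.piecewise f g x) = ∑ x ∈ Y₁, F x (f x) + ∑ x ∈ Y₂, F x (g x) := by
  rw [Finset.sum_union h]
  congr 1
  · exact Finset.sum_congr rfl fun x hx => by rw [Finset.piecewise_eq_of_mem _ _ _ hx]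
  · exact Finset.sum_congr rfl fun x hx => by
      rw [Finset.piecewise_eq_of_notMem _ _ _ (Finset.disjoint_right.mp h hx)]

section AssignmentCosts

variable {α : Type*} {k : ℕ} {Y Y₁ Y₂ : Finset α} {u : α → ℝ} {d : α → Fin k → ℝ}
  {t t₁ t₂ : Fin k → ℝ}

def assignmentCosts (k : ℕ) (Y : Finset α) (u : α → ℝ) (d : α → Fin k → ℝ)
    (t : Fin k → ℝ) : Set ℝ :=
  {v : ℝ | ∃ σ : α → Fin k → ℝ, (∀ x i, 0 ≤ σ x i) ∧
    (∀ x ∈ Y, ∑ i, σ x i = u x) ∧ (∀ i, ∑ x ∈ Y, σ x i = t i) ∧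
    v = ∑ i, ∑ x ∈ Y, σ x i * d x i}

lemma clCost_eq_sInf_assignmentCosts :
    clCost k Y u d t = sInf (assignmentCosts k Y u d t) := rfl

lemma bddBelow_assignmentCosts (hd : ∀ x i, 0 ≤ d x i) :
    BddBelow (assignmentCosts k Y u d t) := by
  refine ⟨0, ?_⟩
  rintro _ ⟨σ, hσ, -, -, rfl⟩
  exact Finset.sum_nonneg fun i _ => Finset.sum_nonneg fun x _ => mul_nonneg (hσ x i) (hd x i)

lemma clCost_le_of_mem_assignmentCosts (hd : ∀ x i, 0 ≤ d x i) {r : ℝ}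
    (hr : r ∈ assignmentCosts k Y u d t) : clCost k Y u d t ≤ r :=
  csInf_le (bddBelow_assignmentCosts hd) hr

lemma nonneg_of_mem_assignmentCosts {r : ℝ} (hr : r ∈ assignmentCosts k Y u d t) (i : Fin k) :
    0 ≤ t i := by
  obtain ⟨σ, hσ, -, hcol, -⟩ := hr
  exact hcol i ▸ Finset.sum_nonneg fun x _ => hσ x i

lemma sum_eq_sum_of_mem_assignmentCosts {r : ℝ} (hr : r ∈ assignmentCosts k Y u d t) :
    ∑ i, t i = ∑ x ∈ Y, u x := by
  obtain ⟨σ, -, hrow, hcol, -⟩ := hr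
  simp_rw [← hcol]
  rw [Finset.sum_comm]
  exact Finset.sum_congr rfl hrow

/-- The proportional assignment `σ x i = u x * t i / ∑ x ∈ Y, u x` is feasible; when the total
mass vanishes it is the zero assignment (division by zero), which is then feasible too. -/
lemma assignmentCosts_nonempty (hu : ∀ x, 0 ≤ u x) (ht : ∀ i, 0 ≤ t i)
    (hsum : ∑ i, t i = ∑ x ∈ Y, u x) : (assignmentCosts k Y u d t).Nonempty := by
  set T := ∑ x ∈ Y, u x
  have hT : 0 ≤ T := Finset.sum_nonneg fun x _ => hu x
  refine ⟨_, fun x i => u x * t i / T, fun x i => by have := hu x; have := ht i; positivity,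
    fun x hx => ?_, fun i => ?_, rfl⟩
  · rw [← Finset.sum_div, ← Finset.mul_sum, hsum]
    exact mul_div_cancel_of_imp fun h0 =>
      (Finset.sum_eq_zero_iff_of_nonneg fun x _ => hu x).mp h0 x hx
  · rw [← Finset.sum_div, ← Finset.sum_mul, mul_comm]
    exact mul_div_cancel_of_imp fun h0 =>
      (Finset.sum_eq_zero_iff_of_nonneg fun i _ => ht i).mp (hsum.trans h0) i (Finset.mem_univ i)

variable [DecidableEq α]

lemma assignmentCosts_add_subset_union (h : Disjoint Y₁ Y₂) :
    assignmentCosts k Y₁ u d t₁ + assignmentCosts k Y₂ u d t₂ ⊆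
      assignmentCosts k (Y₁ ∪ Y₂) u d (t₁ + t₂) := by
  rintro _ ⟨_, ⟨σ₁, hσ₁, hrow₁, hcol₁, rfl⟩, _, ⟨σ₂, hσ₂, hrow₂, hcol₂, rfl⟩, rfl⟩
  refine ⟨Y₁.piecewise σ₁ σ₂,
    fun x i => Y₁.piecewise_cases σ₁ σ₂ (fun s => 0 ≤ s i) (hσ₁ x i) (hσ₂ x i), ?_, ?_, ?_⟩
  · intro x hx
    by_cases hx₁ : x ∈ Y₁
    · rw [Y₁.piecewise_eq_of_mem σ₁ σ₂ hx₁, hrow₁ x hx₁]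
    · rw [Y₁.piecewise_eq_of_notMem σ₁ σ₂ hx₁, hrow₂ x ((Finset.mem_union.mp hx).resolve_left hx₁)]
  · intro i
    rw [Finset.sum_union_piecewise h σ₁ σ₂ fun _ s => s i, hcol₁, hcol₂, Pi.add_apply]
  · dsimp only
    rw [← Finset.sum_add_distrib]
    exact Finset.sum_congr rfl fun i _ =>
      (Finset.sum_union_piecewise h σ₁ σ₂ fun x s => s i * d x i).symm

lemma exists_add_eq_of_mem_assignmentCosts_union (h : Disjoint Y₁ Y₂) {r : ℝ}
    (hr : r ∈ assignmentCosts k (Y₁ ∪ Y₂) u d t) :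
    ∃ t₁ t₂, t₁ + t₂ = t ∧
      r ∈ assignmentCosts k Y₁ u d t₁ + assignmentCosts k Y₂ u d t₂ := by
  obtain ⟨σ, hσ, hrow, hcol, rfl⟩ := hr
  refine ⟨fun i => ∑ x ∈ Y₁, σ x i, fun i => ∑ x ∈ Y₂, σ x i,
    funext fun i => by rw [Pi.add_apply, ← Finset.sum_union h, hcol], _,
    ⟨σ, hσ, fun x hx => hrow x (Finset.mem_union_left _ hx), fun _ => rfl, rfl⟩, _,
    ⟨σ, hσ, fun x hx => hrow x (Finset.mem_union_right _ hx), fun _ => rfl, rfl⟩, ?_⟩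
  dsimp only
  rw [← Finset.sum_add_distrib]
  exact Finset.sum_congr rfl fun i _ => (Finset.sum_union h).symm

lemma clCost_union_le_add (hd : ∀ x i, 0 ≤ d x i) (h : Disjoint Y₁ Y₂)
    (h₁ : (assignmentCosts k Y₁ u d t₁).Nonempty) (h₂ : (assignmentCosts k Y₂ u d t₂).Nonempty) :
    clCost k (Y₁ ∪ Y₂) u d (t₁ + t₂) ≤ clCost k Y₁ u d t₁ + clCost k Y₂ u d t₂ := by
  simp only [clCost_eq_sInf_assignmentCosts]
  rw [← csInf_add h₁ (bddBelow_assignmentCosts hd) h₂ (bddBelow_assignmentCosts hd)]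
  exact csInf_le_csInf (bddBelow_assignmentCosts hd) (h₁.add h₂)
    (assignmentCosts_add_subset_union h)

end AssignmentCosts

lemma clCost_union_le_mul {α : Type*} [DecidableEq α] {k : ℕ} {c : ℝ} (hc : 0 ≤ c)
    {X₁ X₂ S₁ S₂ : Finset α} (hX : Disjoint X₁ X₂) (hS : Disjoint S₁ S₂)
    {w v : α → ℝ} (hw : ∀ x, 0 ≤ w x) (hv : ∀ x, 0 ≤ v x)
    {d : α → Fin k → ℝ} (hd : ∀ x i, 0 ≤ d x i)
    (htot₁ : ∑ x ∈ S₁, v x = ∑ x ∈ X₁, w x) (htot₂ : ∑ x ∈ S₂, v x = ∑ x ∈ X₂, w x)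
    (h₁ : ∀ t : Fin k → ℝ, (∀ i, 0 ≤ t i) → ∑ i, t i = ∑ x ∈ X₁, w x →
      clCost k X₁ w d t ≤ c * clCost k S₁ v d t)
    (h₂ : ∀ t : Fin k → ℝ, (∀ i, 0 ≤ t i) → ∑ i, t i = ∑ x ∈ X₂, w x →
      clCost k X₂ w d t ≤ c * clCost k S₂ v d t)
    {t : Fin k → ℝ} (ht : ∀ i, 0 ≤ t i) (hsum : ∑ i, t i = ∑ x ∈ S₁ ∪ S₂, v x) :
    clCost k (X₁ ∪ X₂) w d t ≤ c * clCost k (S₁ ∪ S₂) v d t := by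
  refine le_mul_csInf hc (assignmentCosts_nonempty hv ht hsum) fun b hb => ?_
  obtain ⟨t₁, t₂, rfl, b₁, hb₁, b₂, hb₂, rfl⟩ := exists_add_eq_of_mem_assignmentCosts_union hS hb
  have hsum₁ := (sum_eq_sum_of_mem_assignmentCosts hb₁).trans htot₁
  have hsum₂ := (sum_eq_sum_of_mem_assignmentCosts hb₂).trans htot₂
  have ht₁ := nonneg_of_mem_assignmentCosts hb₁
  have ht₂ := nonneg_of_mem_assignmentCosts hb₂
  calc clCost k (X₁ ∪ X₂) w d (t₁ + t₂)
      ≤ clCost k X₁ w d t₁ + clCost k X₂ w d t₂ :=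
        clCost_union_le_add hd hX (assignmentCosts_nonempty hw ht₁ hsum₁)
          (assignmentCosts_nonempty hw ht₂ hsum₂)
    _ ≤ c * clCost k S₁ v d t₁ + c * clCost k S₂ v d t₂ :=
        add_le_add (h₁ t₁ ht₁ hsum₁) (h₂ t₂ ht₂ hsum₂)
    _ ≤ c * (b₁ + b₂) := by
        rw [mul_add]
        gcongr
        exacts [clCost_le_of_mem_assignmentCosts hd hb₁, clCost_le_of_mem_assignmentCosts hd hb₂]

theorem stmt12_general {α : Type*} [DecidableEq α] (k : ℕ) (ε : ℝ) (hε : 0 ≤ ε)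
    (X₁ X₂ S₁ S₂ : Finset α) (hX : Disjoint X₁ X₂) (hS : Disjoint S₁ S₂)
    (w v : α → ℝ) (hw : ∀ x, 0 ≤ w x) (hv : ∀ x, 0 ≤ v x)
    (d : α → Fin k → ℝ) (hd : ∀ x i, 0 ≤ d x i)
    (htot₁ : ∑ x ∈ S₁, v x = ∑ x ∈ X₁, w x)
    (htot₂ : ∑ x ∈ S₂, v x = ∑ x ∈ X₂, w x)
    (hcs₁ : ∀ t : Fin k → ℝ, (∀ i, 0 ≤ t i) → ∑ i, t i = ∑ x ∈ X₁, w x →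
      clCost k X₁ w d t ≤ (1 + ε) * clCost k S₁ v d t ∧
      clCost k S₁ v d t ≤ (1 + ε) * clCost k X₁ w d t)
    (hcs₂ : ∀ t : Fin k → ℝ, (∀ i, 0 ≤ t i) → ∑ i, t i = ∑ x ∈ X₂, w x →
      clCost k X₂ w d t ≤ (1 + ε) * clCost k S₂ v d t ∧
      clCost k S₂ v d t ≤ (1 + ε) * clCost k X₂ w d t) :
    ∀ t : Fin k → ℝ, (∀ i, 0 ≤ t i) → ∑ i, t i = ∑ x ∈ X₁ ∪ X₂, w x →
      clCost k (X₁ ∪ X₂) w d t ≤ (1 + ε) * clCost k (S₁ ∪ S₂) v d t ∧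
      clCost k (S₁ ∪ S₂) v d t ≤ (1 + ε) * clCost k (X₁ ∪ X₂) w d t := by
  intro t ht hsum
  have hc : 0 ≤ 1 + ε := by linarith
  have hsumS : ∑ i, t i = ∑ x ∈ S₁ ∪ S₂, v x := by
    rw [Finset.sum_union hS, htot₁, htot₂, ← Finset.sum_union hX, hsum]
  exact ⟨clCost_union_le_mul hc hX hS hw hv hd htot₁ htot₂
      (fun t ht hs => (hcs₁ t ht hs).1) (fun t ht hs => (hcs₂ t ht hs).1) ht hsumS,
    clCost_union_le_mul hc hS hX hv hw hd htot₁.symm htot₂.symm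
      (fun t ht hs => (hcs₁ t ht (hs.trans htot₁)).2)
      (fun t ht hs => (hcs₂ t ht (hs.trans htot₂)).2) ht hsum⟩

theorem stmt12 {α : Type*} [DecidableEq α] (k : ℕ) (hk : 0 < k) (ε : ℝ) (hε : 0 ≤ ε)
    (X₁ X₂ S₁ S₂ : Finset α) (hX : Disjoint X₁ X₂) (hS : Disjoint S₁ S₂)
    (w v : α → ℝ) (hw : ∀ x, 0 ≤ w x) (hv : ∀ x, 0 ≤ v x)
    (d : α → Fin k → ℝ) (hd : ∀ x i, 0 ≤ d x i)
    (htot₁ : ∑ x ∈ S₁, v x = ∑ x ∈ X₁, w x)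
    (htot₂ : ∑ x ∈ S₂, v x = ∑ x ∈ X₂, w x)
    (hcs₁ : ∀ t : Fin k → ℝ, (∀ i, 0 ≤ t i) → ∑ i, t i = ∑ x ∈ X₁, w x →
      clCost k X₁ w d t ≤ (1 + ε) * clCost k S₁ v d t ∧
      clCost k S₁ v d t ≤ (1 + ε) * clCost k X₁ w d t)
    (hcs₂ : ∀ t : Fin k → ℝ, (∀ i, 0 ≤ t i) → ∑ i, t i = ∑ x ∈ X₂, w x →
      clCost k X₂ w d t ≤ (1 + ε) * clCost k S₂ v d t ∧
      clCost k S₂ v d t ≤ (1 + ε) * clCost k X₂ w d t) :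
    ∀ t : Fin k → ℝ, (∀ i, 0 ≤ t i) → ∑ i, t i = ∑ x ∈ X₁ ∪ X₂, w x →
      clCost k (X₁ ∪ X₂) w d t ≤ (1 + ε) * clCost k (S₁ ∪ S₂) v d t ∧
      clCost k (S₁ ∪ S₂) v d t ≤ (1 + ε) * clCost k (X₁ ∪ X₂) w d t :=
  stmt12_general k ε hε X₁ X₂ S₁ S₂ hX hS w v hw hv d hd htot₁ htot₂ hcs₁ hcs₂
end

section
/- Decomposition of constrained assignment cost over a disjoint union: let X = X₁ ⊎ X₂ be a disjoint union of finite sets with weight function w, let d : X × [k] → ℝ≥0, and let Γ = (t₁,…,t_k) satisfy ∑_i t_i = ∑_{x∈X} w(x). Then cost(X, w, Γ) = min over all pairs of tuples Γ₁, Γ₂ ∈ (ℝ≥0)^k with Γ₁ + Γ₂ = Γ (componentwise), ∑_i (Γ₁)_i = ∑_{x∈X₁} w(x), and ∑_i (Γ₂)_i = ∑_{x∈X₂} w(x), of cost(X₁, w, Γ₁) + cost(X₂, w, Γ₂), where cost(Y, w, Γ') is the minimum of ∑_i ∑_{y∈Y} σ(y, i)·d(y, i) over assignments σ with row sums w(y)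 and column sums (Γ')_i. -/
/-!
Every assignment of `X₁ ∪ X₂` restricts to assignments of `X₁` and `X₂` whose column sums add up
to `t`, and conversely assignments of `X₁` and `X₂` with column sums `t₁ + t₂ = t` glue to one of
`X₁ ∪ X₂`; the costs add in both directions. So the set of achievable costs on the union is the
union, over all splits of `t`, of the Minkowski sums of the achievable costs on the parts, and
taking infima gives the decomposition.
-/

open Finset
open scoped Pointwise

theorem csInf_eq_of_forall_exists_le_of_forall_csInf_le {β : Type*}
    [ConditionallyCompleteLattice β] {S T : Set β} (hT : BddBelow T)
    (hST : ∀ v ∈ S, ∃ e ∈ T, e ≤ v) (hTS : ∀ e ∈ T, S.Nonempty ∧ sInf S ≤ e) :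
    sInf S = sInf T := by
  rcases S.eq_empty_or_nonempty with rfl | hS
  · rcases T.eq_empty_or_nonempty with rfl | ⟨e, he⟩
    · rfl
    · exact absurd (hTS e he).1 Set.not_nonempty_empty
  obtain ⟨v, hv⟩ := hS
  obtain ⟨e, he, -⟩ := hST v hv
  refine le_antisymm (le_csInf ⟨e, he⟩ fun e he => (hTS e he).2) (le_csInf ⟨v, hv⟩ fun v hv => ?_)
  obtain ⟨e, he, hev⟩ := hST v hv
  exact (csInf_le hT he).trans hev

section AssignmentCost

variable {α : Type*} {k : ℕ} {Y : Finset α} {u : α → ℝ} {d : α → Fin k → ℝ} {t : Fin k → ℝ}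

def clCostSet (k : ℕ) (Y : Finset α) (u : α → ℝ) (d : α → Fin k → ℝ) (t : Fin k → ℝ) :
    Set ℝ :=
  {v : ℝ | ∃ σ : α → Fin k → ℝ, (∀ x i, 0 ≤ σ x i) ∧
    (∀ x ∈ Y, ∑ i, σ x i = u x) ∧ (∀ i, ∑ x ∈ Y, σ x i = t i) ∧
    v = ∑ i, ∑ x ∈ Y, σ x i * d x i}

theorem clCost_eq_sInf_clCostSet : clCost k Y u d t = sInf (clCostSet k Y u d t) := rfl

theorem nonneg_of_mem_clCostSet (hd : ∀ x i, 0 ≤ d x i) {v : ℝ}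
    (hv : v ∈ clCostSet k Y u d t) : 0 ≤ v := by
  obtain ⟨σ, hσ, -, -, rfl⟩ := hv
  exact sum_nonneg fun i _ => sum_nonneg fun x _ => mul_nonneg (hσ x i) (hd x i)

theorem bddBelow_clCostSet (hd : ∀ x i, 0 ≤ d x i) : BddBelow (clCostSet k Y u d t) :=
  ⟨0, fun _ => nonneg_of_mem_clCostSet hd⟩

theorem clCost_nonneg (hd : ∀ x i, 0 ≤ d x i) : 0 ≤ clCost k Y u d t :=
  Real.sInf_nonneg fun _ => nonneg_of_mem_clCostSet hd

theorem cost_mem_clCostSet (σ : α → Fin k → ℝ) (hσ : ∀ x i, 0 ≤ σ x i)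
    (hrow : ∀ x ∈ Y, ∑ i, σ x i = u x) :
    ∑ i, ∑ x ∈ Y, σ x i * d x i ∈ clCostSet k Y u d (fun i => ∑ x ∈ Y, σ x i) :=
  ⟨σ, hσ, hrow, fun _ => rfl, rfl⟩

theorem clCostSet_nonempty (hu : ∀ x, 0 ≤ u x) (ht : ∀ i, 0 ≤ t i)
    (hsum : ∑ i, t i = ∑ x ∈ Y, u x) : (clCostSet k Y u d t).Nonempty := by
  set T := ∑ i, t i
  have hT : 0 ≤ T := sum_nonneg fun i _ => ht i
  -- the proportional assignment; when `T = 0` all data vanish and so does `σ`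
  refine ⟨_, fun x i => u x * t i / T, fun x i => div_nonneg (mul_nonneg (hu x) (ht i)) hT,
    fun x hx => ?_, fun i => ?_, rfl⟩
  · rw [← sum_div, ← mul_sum]
    rcases hT.eq_or_lt with h0 | hpos
    · have hux : u x = 0 :=
        (sum_eq_zero_iff_of_nonneg fun x _ => hu x).mp (hsum ▸ h0.symm) x hx
      simp [hux]
    · exact mul_div_cancel_right₀ _ hpos.ne'
  · rw [← sum_div, ← sum_mul, ← hsum]
    rcases hT.eq_or_lt with h0 | hpos
    · have hti : t i = 0 := (sum_eq_zero_iff_of_nonneg fun i _ => ht i).mp h0.symm i (mem_univ i)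
      simp [hti]
    · exact mul_div_cancel_left₀ _ hpos.ne'

theorem sum_colSums_eq_sum_of_rowSums {σ : α → Fin k → ℝ}
    (hrow : ∀ x ∈ Y, ∑ i, σ x i = u x) :
    ∑ i, ∑ x ∈ Y, σ x i = ∑ x ∈ Y, u x := by
  rw [sum_comm]
  exact sum_congr rfl hrow

variable [DecidableEq α] {X₁ X₂ : Finset α}

theorem exists_split_le_of_mem_clCostSet_union (hdisj : Disjoint X₁ X₂) (hd : ∀ x i, 0 ≤ d x i)
    {v : ℝ} (hv : v ∈ clCostSet k (X₁ ∪ X₂) u d t) :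
    ∃ t₁ t₂ : Fin k → ℝ, (∀ i, 0 ≤ t₁ i) ∧ (∀ i, 0 ≤ t₂ i) ∧ (∀ i, t₁ i + t₂ i = t i) ∧
      (∑ i, t₁ i = ∑ x ∈ X₁, u x) ∧ (∑ i, t₂ i = ∑ x ∈ X₂, u x) ∧
      clCost k X₁ u d t₁ + clCost k X₂ u d t₂ ≤ v := by
  obtain ⟨σ, hσ, hrow, hcol, rfl⟩ := hv
  have hrow₁ : ∀ x ∈ X₁, ∑ i, σ x i = u x := fun x hx => hrow x (mem_union_left _ hx)
  have hrow₂ : ∀ x ∈ X₂, ∑ i, σ x i = u x := fun x hx => hrow x (mem_union_right _ hx)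
  refine ⟨fun i => ∑ x ∈ X₁, σ x i, fun i => ∑ x ∈ X₂, σ x i,
    fun i => sum_nonneg fun x _ => hσ x i, fun i => sum_nonneg fun x _ => hσ x i,
    fun i => by rw [← hcol i, sum_union hdisj], sum_colSums_eq_sum_of_rowSums hrow₁,
    sum_colSums_eq_sum_of_rowSums hrow₂, ?_⟩
  calc clCost k X₁ u d _ + clCost k X₂ u d _
      ≤ ∑ i, ∑ x ∈ X₁, σ x i * d x i + ∑ i, ∑ x ∈ X₂, σ x i * d x i :=
        add_le_add (csInf_le (bddBelow_clCostSet hd) (cost_mem_clCostSet σ hσ hrow₁))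
          (csInf_le (bddBelow_clCostSet hd) (cost_mem_clCostSet σ hσ hrow₂))
    _ = ∑ i, ∑ x ∈ X₁ ∪ X₂, σ x i * d x i := by
        rw [← sum_add_distrib]
        exact sum_congr rfl fun i _ => (sum_union hdisj).symm

theorem clCostSet_add_subset_clCostSet_union (hdisj : Disjoint X₁ X₂) {t₁ t₂ : Fin k → ℝ}
    (hadd : ∀ i, t₁ i + t₂ i = t i) :
    clCostSet k X₁ u d t₁ + clCostSet k X₂ u d t₂ ⊆ clCostSet k (X₁ ∪ X₂) u d t := by
  rintro _ ⟨_, ⟨τ₁, hτ₁, hrow₁, hcol₁, rfl⟩, _, ⟨τ₂, hτ₂, hrow₂, hcol₂, rfl⟩, rfl⟩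
  let σ : α → Fin k → ℝ := fun x => if x ∈ X₁ then τ₁ x else τ₂ x
  have hσ₁ : ∀ x ∈ X₁, σ x = τ₁ x := fun x hx => if_pos hx
  have hσ₂ : ∀ x ∈ X₂, σ x = τ₂ x := fun x hx => if_neg (disjoint_right.mp hdisj hx)
  have sum_split : ∀ f : α → (Fin k → ℝ) → ℝ,
      ∑ x ∈ X₁ ∪ X₂, f x (σ x) = ∑ x ∈ X₁, f x (τ₁ x) + ∑ x ∈ X₂, f x (τ₂ x) := fun f => by
    rw [sum_union hdisj, sum_congr rfl fun x hx => congrArg (f x) (hσ₁ x hx),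
      sum_congr rfl fun x hx => congrArg (f x) (hσ₂ x hx)]
  refine ⟨σ, fun x i => ?_, fun x hx => ?_, fun i => ?_, ?_⟩
  · by_cases hx : x ∈ X₁ <;> simp only [σ, hx, if_true, if_false, hτ₁, hτ₂]
  · rcases mem_union.mp hx with hx | hx
    · rw [hσ₁ x hx, hrow₁ x hx]
    · rw [hσ₂ x hx, hrow₂ x hx]
  · rw [sum_split fun _ s => s i, hcol₁, hcol₂, hadd]
  · show _ + _ = _
    rw [← sum_add_distrib]
    exact sum_congr rfl fun i _ => (sum_split fun x s => s i * d x i).symm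

end AssignmentCost

theorem stmt13_general {α : Type*} [DecidableEq α] (k : ℕ)
    (X₁ X₂ : Finset α) (hdisj : Disjoint X₁ X₂)
    (w : α → ℝ) (hw : ∀ x, 0 ≤ w x)
    (d : α → Fin k → ℝ) (hd : ∀ x i, 0 ≤ d x i)
    (t : Fin k → ℝ) :
    clCost k (X₁ ∪ X₂) w d t =
      sInf {v : ℝ | ∃ t₁ t₂ : Fin k → ℝ, (∀ i, 0 ≤ t₁ i) ∧ (∀ i, 0 ≤ t₂ i) ∧
        (∀ i, t₁ i + t₂ i = t i) ∧
        (∑ i, t₁ i = ∑ x ∈ X₁, w x) ∧ (∑ i, t₂ i = ∑ x ∈ X₂, w x) ∧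
        v = clCost k X₁ w d t₁ + clCost k X₂ w d t₂} := by
  rw [clCost_eq_sInf_clCostSet]
  refine csInf_eq_of_forall_exists_le_of_forall_csInf_le ⟨0, ?_⟩ (fun v hv => ?_) ?_
  · rintro _ ⟨t₁, t₂, -, -, -, -, -, rfl⟩
    exact add_nonneg (clCost_nonneg hd) (clCost_nonneg hd)
  · obtain ⟨t₁, t₂, ht₁, ht₂, hadd, hs₁, hs₂, hle⟩ :=
      exists_split_le_of_mem_clCostSet_union hdisj hd hv
    exact ⟨_, ⟨t₁, t₂, ht₁, ht₂, hadd, hs₁, hs₂, rfl⟩, hle⟩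
  · rintro _ ⟨t₁, t₂, ht₁, ht₂, hadd, hs₁, hs₂, rfl⟩
    have hne₁ := clCostSet_nonempty (d := d) hw ht₁ hs₁
    have hne₂ := clCostSet_nonempty (d := d) hw ht₂ hs₂
    have hsub := clCostSet_add_subset_clCostSet_union (u := w) (d := d) hdisj hadd
    refine ⟨(hne₁.add hne₂).mono hsub, ?_⟩
    rw [clCost_eq_sInf_clCostSet, clCost_eq_sInf_clCostSet,
      ← csInf_add hne₁ (bddBelow_clCostSet hd) hne₂ (bddBelow_clCostSet hd)]
    exact csInf_le_csInf (bddBelow_clCostSet hd) (hne₁.add hne₂) hsub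

theorem stmt13 {α : Type*} [DecidableEq α] (k : ℕ) (hk : 0 < k)
    (X₁ X₂ : Finset α) (hdisj : Disjoint X₁ X₂)
    (w : α → ℝ) (hw : ∀ x, 0 ≤ w x)
    (d : α → Fin k → ℝ) (hd : ∀ x i, 0 ≤ d x i)
    (t : Fin k → ℝ) (ht : ∀ i, 0 ≤ t i)
    (htot : ∑ i, t i = ∑ x ∈ X₁ ∪ X₂, w x) :
    clCost k (X₁ ∪ X₂) w d t =
      sInf {v : ℝ | ∃ t₁ t₂ : Fin k → ℝ, (∀ i, 0 ≤ t₁ i) ∧ (∀ i, 0 ≤ t₂ i) ∧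
        (∀ i, t₁ i + t₂ i = t i) ∧
        (∑ i, t₁ i = ∑ x ∈ X₁, w x) ∧ (∑ i, t₂ i = ∑ x ∈ X₂, w x) ∧
        v = clCost k X₁ w d t₁ + clCost k X₂ w d t₂} :=
  stmt13_general k X₁ X₂ hdisj w hw d hd t
end
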